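/- arXiv:2111.11551 — 6 statements merged into one kernel-verified Lean document; each statement's English description precedes it below -/
import Mathlib

section
/- Lemma 1 (FP1-feasibility transfers to CP1). Let (ā, d̄, ē, f̄, x, p, q) be a feasible point of problem FP1. Define u_{ijk} := d̄_{ijk}·x_{ijk} for every (i,j)∈IJ and 1≤k≤K_i. Then (ā, d̄, ē, f̄, u, q) is a feasible point of problem CP1, and its CP1 objective value Φ_CP1 equals the FP1 objective value Φ_FP1 of (ā, d̄, ē, f̄, x, p, q). -/
open Finset

noncomputable section

/-- The exponential cone `K_exp ⊆ ℝ³`. -/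
def Kexp : Set (ℝ × ℝ × ℝ) :=
  {v | 0 < v.1 ∧ 0 < v.2.1 ∧ v.2.2 ≤ v.2.1 * Real.log (v.1 / v.2.1)} ∪
  {v | 0 ≤ v.1 ∧ v.2.1 = 0 ∧ v.2.2 ≤ 0}

/-- All network primitives and parameter assumptions for the ride-hailing model
underlying problems FP1 and CP1. -/
structure Params (I : Type) [Fintype I] [DecidableEq I] where
  nonemptyI : Nonempty I
  /-- destination zones reachable with a passenger: `j ∈ Iout i ↔ (i,j) ∈ IJ` -/
  Iout : I → Finset I
  /-- destination zones reachable empty: `j ∈ Itil i ↔ (i,j) ∈ ĨJ` -/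
  Itil : I → Finset I
  IJ_nonempty : ∃ i j, j ∈ Iout i
  connected : ∀ i j : I, ∃ (n : ℕ) (c : ℕ → I),
    c 0 = i ∧ c n = j ∧ ∀ m, m < n → c (m + 1) ∈ Itil (c m)
  K : I → ℕ
  K_pos : ∀ i, 1 ≤ K i
  lam : I → I → ℝ
  mu : I → I → ℝ
  mutil : I → I → ℝ
  nu : ℕ → ℝ
  del : ℕ → ℝ
  sigma : I → ℝ
  om : ℝ
  beta : I → I → ℝ
  alpha : I → I → ℕ → ℝ
  phi : I → I → ℕ → ℝ
  psi : I → I → ℝ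
  lam_pos : ∀ i j, j ∈ Iout i → 0 < lam i j
  mu_pos : ∀ i j, j ∈ Iout i → 0 < mu i j
  mutil_pos : ∀ i j, j ∈ Itil i → 0 < mutil i j
  nu_pos : ∀ k, 1 ≤ k → k ≤ Finset.univ.sup K → 0 < nu k
  nu_strictAnti : ∀ k, 1 ≤ k → k + 1 ≤ Finset.univ.sup K → nu (k + 1) < nu k
  del_zero : del 0 = 0
  del_strictMono : ∀ k, k + 1 ≤ Finset.univ.sup K → del k < del (k + 1)
  sigma_pos : ∀ i, 0 < sigma i
  om_pos : 0 < om
  beta_pos : ∀ i j, j ∈ Iout i → 0 < beta i j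
  alpha_strictAnti : ∀ i j k, j ∈ Iout i → 1 ≤ k → k + 1 ≤ K i →
    alpha i j (k + 1) < alpha i j k
  phi_mono : ∀ i j k, j ∈ Iout i → 1 ≤ k → k + 1 ≤ K i →
    phi i j k ≤ phi i j (k + 1)

variable {I : Type} [Fintype I] [DecidableEq I]

/-- Sign restrictions and constraints (F4), (F5), (F6), shared by FP1 and CP1. -/
def SharedConstraints (P : Params I) (a : I → ℝ) (d : I → I → ℕ → ℝ)
    (e f : I → I → ℝ) : Prop :=
  (∀ i, 0 ≤ a i) ∧
  (∀ i j, j ∈ P.Iout i → ∀ k ∈ Finset.Icc 1 (P.K i), 0 ≤ d i j k) ∧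
  (∀ i j, j ∈ P.Itil i → 0 ≤ e i j) ∧
  (∀ i j, j ∈ P.Iout i → 0 ≤ f i j) ∧
  -- (F4)
  (∀ i j, j ∈ P.Iout i →
    ∑ k ∈ Finset.Icc 1 (P.K i), P.nu k * d i j k = P.mu i j * f i j) ∧
  -- (F5)
  (∀ i : I,
    (∑ j ∈ Finset.univ.filter (fun j => i ∈ P.Itil j), P.mutil j i * e j i) +
    (∑ j ∈ Finset.univ.filter (fun j => i ∈ P.Iout j), P.mu j i * f j i) =
    (∑ j ∈ P.Itil i, P.mutil i j * e i j) +
    (∑ j ∈ P.Iout i, P.mu i j * f i j)) ∧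
  -- (F6)
  ((∑ i, a i) + (∑ i, ∑ j ∈ P.Itil i, e i j) +
    (∑ i, ∑ j ∈ P.Iout i, (f i j + ∑ k ∈ Finset.Icc 1 (P.K i), d i j k)) = 1)

/-- Feasibility for problem FP1. -/
def FP1Feasible (P : Params I) (a : I → ℝ) (d : I → I → ℕ → ℝ)
    (e f : I → I → ℝ) (x p : I → I → ℕ → ℝ) (q : I → ℕ → ℝ) : Prop :=
  SharedConstraints P a d e f ∧
  -- (F1)
  (∀ i, ∀ k ∈ Finset.Icc 1 (P.K i),
    ∑ k' ∈ Finset.Icc 1 k, q i k' =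
      1 - Real.exp (-(P.om * P.del k ^ 2 * a i / P.sigma i))) ∧
  -- (F2)
  (∀ i j, j ∈ P.Iout i → ∀ k ∈ Finset.Icc 1 (P.K i),
    p i j k = Real.exp (P.alpha i j k - P.beta i j * x i j k) /
      (1 + Real.exp (P.alpha i j k - P.beta i j * x i j k))) ∧
  -- (F3)
  (∀ i j, j ∈ P.Iout i → ∀ k ∈ Finset.Icc 1 (P.K i),
    P.lam i j * q i k * p i j k = P.nu k * d i j k)

/-- Feasibility for problem CP1. -/
def CP1Feasible (P : Params I) (a : I → ℝ) (d : I → I → ℕ → ℝ)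
    (e f : I → I → ℝ) (u : I → I → ℕ → ℝ) (q : I → ℕ → ℝ) : Prop :=
  SharedConstraints P a d e f ∧
  (∀ i, ∀ k ∈ Finset.Icc 1 (P.K i), 0 ≤ q i k) ∧
  -- (C1)
  (∀ i, ∀ k ∈ Finset.Icc 1 (P.K i),
    ((1 - ∑ k' ∈ Finset.Icc 1 k, q i k', 1,
      -(P.om * P.del k ^ 2 * a i / P.sigma i)) : ℝ × ℝ × ℝ) ∈ Kexp) ∧
  -- (C2)
  (∀ i j, j ∈ P.Iout i → ∀ k ∈ Finset.Icc 1 (P.K i),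
    ((P.lam i j * q i k - P.nu k * d i j k, P.nu k * d i j k,
      P.beta i j * P.nu k * u i j k - P.alpha i j k * P.nu k * d i j k) :
      ℝ × ℝ × ℝ) ∈ Kexp)

/-- The FP1 objective Φ_FP1. -/
def objFP1 (P : Params I) (d : I → I → ℕ → ℝ) (e : I → I → ℝ)
    (x : I → I → ℕ → ℝ) : ℝ :=
  (∑ i, ∑ j ∈ P.Iout i, ∑ k ∈ Finset.Icc 1 (P.K i),
      P.nu k * d i j k * (x i j k - P.phi i j k)) -
  ∑ i, ∑ j ∈ P.Itil i, P.psi i j * P.mutil i j * e i j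

/-- The CP1 objective Φ_CP1. -/
def objCP1 (P : Params I) (d : I → I → ℕ → ℝ) (e : I → I → ℝ)
    (u : I → I → ℕ → ℝ) : ℝ :=
  (∑ i, ∑ j ∈ P.Iout i, ∑ k ∈ Finset.Icc 1 (P.K i),
      (P.nu k * u i j k - P.nu k * P.phi i j k * d i j k)) -
  ∑ i, ∑ j ∈ P.Itil i, P.psi i j * P.mutil i j * e i j

/-- Optimality for problem CP1. -/
def CP1Optimal (P : Params I) (a : I → ℝ) (d : I → I → ℕ → ℝ)
    (e f : I → I → ℝ) (u : I → I → ℕ → ℝ) (q : I → ℕ → ℝ) : Prop :=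
  CP1Feasible P a d e f u q ∧
  ∀ a' d' e' f' u' q', CP1Feasible P a' d' e' f' u' q' →
    objCP1 P d' e' u' ≤ objCP1 P d e u

/-- Optimality for problem FP1. -/
def FP1Optimal (P : Params I) (a : I → ℝ) (d : I → I → ℕ → ℝ)
    (e f : I → I → ℝ) (x p : I → I → ℕ → ℝ) (q : I → ℕ → ℝ) : Prop :=
  FP1Feasible P a d e f x p q ∧
  ∀ a' d' e' f' x' p' q', FP1Feasible P a' d' e' f' x' p' q' →
    objFP1 P d' e' x' ≤ objFP1 P d e x

/-- Condition (i). -/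
def CondI (P : Params I) (a : I → ℝ) (q : I → ℕ → ℝ) : Prop :=
  ∀ i, ∀ k ∈ Finset.Icc 1 (P.K i),
    ∑ k' ∈ Finset.Icc 1 k, q i k' =
      1 - Real.exp (-(P.om * P.del k ^ 2 * a i / P.sigma i))

/-- Condition (ii). -/
def CondII (P : Params I) (d u : I → I → ℕ → ℝ) (q : I → ℕ → ℝ) : Prop :=
  ∀ i j, j ∈ P.Iout i → ∀ k ∈ Finset.Icc 1 (P.K i),
    (d i j k = 0 ∧ u i j k = 0) ∨
    (0 < d i j k ∧
      P.nu k * d i j k *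
        Real.log (P.nu k * d i j k / (P.lam i j * q i k - P.nu k * d i j k)) =
      P.alpha i j k * P.nu k * d i j k - P.beta i j * P.nu k * u i j k)

/-- Condition (iii) at zone `i`. -/
def CondIII (P : Params I) (d : I → I → ℕ → ℝ) (q : I → ℕ → ℝ) (i : I) : Prop :=
  ∀ k ∈ Finset.Icc 1 (P.K i),
    0 < q i k ∧ 0 < ∑ j ∈ P.Iout i, d i j k

/-- Condition (iv) at zone `i`. -/
def CondIV (P : Params I) (d : I → I → ℕ → ℝ) (q : I → ℕ → ℝ) (i : I) : Prop :=
  ∀ j ∈ P.Iout i,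
    ((∀ k, 1 ≤ k → k + 1 ≤ P.K i →
        P.nu (k + 1) * d i j (k + 1) / (P.lam i j * q i (k + 1)) <
        P.nu k * d i j k / (P.lam i j * q i k)) ∧
      0 < P.nu (P.K i) * d i j (P.K i) / (P.lam i j * q i (P.K i))) ∨
    (∀ k ∈ Finset.Icc 1 (P.K i), d i j k = 0)


/-!
Every cone constraint of CP1 is an instance of `(w eᵗ, w, w t) ∈ K_exp` for `w ≥ 0`. For (C1),
(F1) gives `1 - ∑_{k' ≤ k} q_{ik'} = e^{-τ}` with `τ = ω δ_k² ā_i / σ_i`, so take `w = 1`, `t = -τ`.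
For (C2), put `w = ν_k d̄_{ijk}` and `y = α_{ijk} - β_{ij} x_{ijk}`: (F2) and (F3) say that
`λ_{ij} q_{ik} · eʸ/(1 + eʸ) = w`, hence `λ_{ij} q_{ik} - w = w e^{-y}`, while
`β_{ij} ν_k u_{ijk} - α_{ijk} ν_k d̄_{ijk} = -w y`. Nonnegativity of `q` holds because, by (F1) and
`δ₀ = 0`, `q_{ik} = e^{-ω δ_{k-1}² ā_i/σ_i} - e^{-ω δ_k² ā_i/σ_i}` with `0 ≤ δ_{k-1} < δ_k`.
-/

open Real

theorem mul_exp_mem_Kexp {w : ℝ} (hw : 0 ≤ w) (t : ℝ) : (w * exp t, w, w * t) ∈ Kexp := by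
  rcases hw.eq_or_lt with rfl | hw
  · exact Or.inr (by simp)
  · refine Or.inl ⟨by positivity, hw, ?_⟩
    dsimp only
    rw [mul_div_cancel_left₀ _ hw.ne', log_exp]

theorem sub_eq_mul_exp_neg_of_mul_logistic_eq {s w y : ℝ}
    (h : s * (exp y / (1 + exp y)) = w) : s - w = w * exp (-y) := by
  have hlogistic : exp y / (1 + exp y) * (1 + exp (-y)) = 1 := by
    rw [exp_neg]
    field_simp
    ring
  linear_combination (1 + exp (-y)) * h - s * hlogistic

theorem Params.del_nonneg (P : Params I) {k : ℕ} (hk : k ≤ univ.sup P.K) : 0 ≤ P.del k := by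
  induction k with
  | zero => exact P.del_zero.ge
  | succ k ih => exact (ih (by omega)).trans (P.del_strictMono k hk).le

theorem objCP1_mul_eq_objFP1 (P : Params I) (d : I → I → ℕ → ℝ) (e : I → I → ℝ)
    (x : I → I → ℕ → ℝ) :
    objCP1 P d e (fun i j k => d i j k * x i j k) = objFP1 P d e x := by
  unfold objCP1 objFP1
  congr 1
  exact sum_congr rfl fun i _ => sum_congr rfl fun j _ => sum_congr rfl fun k _ => by ring

namespace FP1Feasible

variable {P : Params I} {a : I → ℝ} {d : I → I → ℕ → ℝ} {e f : I → I → ℝ}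
  {x p : I → I → ℕ → ℝ} {q : I → ℕ → ℝ}

theorem sum_q_eq (h : FP1Feasible P a d e f x p q) {i : I} {m : ℕ} (hm : m < P.K i) :
    ∑ k ∈ Icc 1 m, q i k = 1 - exp (-(P.om * P.del m ^ 2 * a i / P.sigma i)) := by
  rcases Nat.eq_zero_or_pos m with rfl | hm0
  · simp [P.del_zero]
  · exact h.2.1 i m (mem_Icc.mpr ⟨hm0, hm.le⟩)

theorem q_nonneg (h : FP1Feasible P a d e f x p q) :
    ∀ i, ∀ k ∈ Icc 1 (P.K i), 0 ≤ q i k := by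
  intro i k hk
  obtain ⟨hk1, hkK⟩ := mem_Icc.mp hk
  obtain ⟨m, rfl⟩ : ∃ m, k = m + 1 := ⟨k - 1, by omega⟩
  have hq : q i (m + 1) = exp (-(P.om * P.del m ^ 2 * a i / P.sigma i)) -
      exp (-(P.om * P.del (m + 1) ^ 2 * a i / P.sigma i)) := by
    have hsucc := h.2.1 i (m + 1) hk
    rw [sum_Icc_succ_top (by omega), h.sum_q_eq (by omega)] at hsucc
    linarith
  have hmK : m + 1 ≤ univ.sup P.K := hkK.trans (le_sup (mem_univ i))
  have hdel : P.del m ≤ P.del (m + 1) := (P.del_strictMono m hmK).le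
  have hdel0 : 0 ≤ P.del m := P.del_nonneg (by omega)
  have ha : 0 ≤ a i := h.1.1 i
  have hω := P.om_pos
  have hσ := P.sigma_pos i
  rw [hq, sub_nonneg, exp_le_exp, neg_le_neg_iff]
  gcongr

theorem cone_C1 (h : FP1Feasible P a d e f x p q) :
    ∀ i, ∀ k ∈ Icc 1 (P.K i), ((1 - ∑ k' ∈ Icc 1 k, q i k', 1,
      -(P.om * P.del k ^ 2 * a i / P.sigma i)) : ℝ × ℝ × ℝ) ∈ Kexp := by
  intro i k hk
  rw [h.2.1 i k hk, sub_sub_cancel]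
  simpa using mul_exp_mem_Kexp zero_le_one (-(P.om * P.del k ^ 2 * a i / P.sigma i))

theorem cone_C2 (h : FP1Feasible P a d e f x p q) :
    ∀ i j, j ∈ P.Iout i → ∀ k ∈ Icc 1 (P.K i),
      ((P.lam i j * q i k - P.nu k * d i j k, P.nu k * d i j k,
        P.beta i j * P.nu k * (d i j k * x i j k) - P.alpha i j k * P.nu k * d i j k) :
        ℝ × ℝ × ℝ) ∈ Kexp := by
  intro i j hj k hk
  set y := P.alpha i j k - P.beta i j * x i j k
  have hν : 0 < P.nu k :=
    P.nu_pos k (mem_Icc.mp hk).1 ((mem_Icc.mp hk).2.trans (le_sup (mem_univ i)))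
  have hw : 0 ≤ P.nu k * d i j k := mul_nonneg hν.le (h.1.2.1 i j hj k hk)
  have hlogistic : P.lam i j * q i k * (exp y / (1 + exp y)) = P.nu k * d i j k := by
    rw [← h.2.2.1 i j hj k hk]
    exact h.2.2.2 i j hj k hk
  rw [sub_eq_mul_exp_neg_of_mul_logistic_eq hlogistic]
  convert mul_exp_mem_Kexp hw (-y) using 3
  ring

end FP1Feasible

/-- Lemma 1: a feasible point of FP1, with `u := d̄ ⬝ x`, yields a feasible point of CP1
with the same objective value. -/
theorem FP1_feasible_to_CP1 {I : Type} [Fintype I] [DecidableEq I] (P : Params I)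
    (a : I → ℝ) (d : I → I → ℕ → ℝ) (e f : I → I → ℝ)
    (x p : I → I → ℕ → ℝ) (q : I → ℕ → ℝ)
    (hfeas : FP1Feasible P a d e f x p q) :
    CP1Feasible P a d e f (fun i j k => d i j k * x i j k) q ∧
    objCP1 P d e (fun i j k => d i j k * x i j k) = objFP1 P d e x :=
  ⟨⟨hfeas.1, hfeas.q_nonneg, hfeas.cone_C1, hfeas.cone_C2⟩, objCP1_mul_eq_objFP1 P d e x⟩

end
end

section
/- Lemma 3 (Condition (ii) holds at every optimum of CP1). Let (ā*, d̄*, ē*, f̄*, u*, q*) be an optimal solution of problem CP1. Then for every (i,j)∈IJ and 1≤k≤K_i, either (d̄*_{ijk}=0 and u*_{ijk}=0), or (d̄*_{ijk}>0 and ν_k d̄*_{ijk}·log(ν_k d̄*_{ijk}/(λ_{ij} q*_{ik} − ν_k d̄*_{ijk})) = α_{ijk} ν_k d̄*_{ijk} − β_{ij} ν_k u*_{ijk}); that is, Condition (ii) holds at (ā*, d̄*, ē*, f̄*, u*, q*). -/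
open Finset

noncomputable section

variable {I : Type} [Fintype I] [DecidableEq I]

/-!
In (C2) the variable `u_{ijk}` occurs only in the third coordinate of a point of the exponential
cone, with positive coefficient `β_{ij} ν_k`, and raising `u_{ijk}` alone keeps every other
constraint and strictly increases the objective. Hence at an optimum that coordinate is the largest one allowed by the cone given the first two
coordinates `(x, y)`: this is `y log (x / y)` when `y > 0` and `0` when `y = 0`, which is
Condition (ii).
-/

lemma mem_Kexp_iff_of_pos {x y z : ℝ} (hy : 0 < y) :
    (x, y, z) ∈ Kexp ↔ 0 < x ∧ z ≤ y * Real.log (x / y) := by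
  simp [Kexp, hy, hy.ne']

lemma mem_Kexp_zero_iff {x z : ℝ} : (x, 0, z) ∈ Kexp ↔ 0 ≤ x ∧ z ≤ 0 := by
  simp [Kexp]

lemma isGreatest_Kexp_of_pos {x y : ℝ} (hx : 0 < x) (hy : 0 < y) :
    IsGreatest {z | (x, y, z) ∈ Kexp} (y * Real.log (x / y)) :=
  ⟨(mem_Kexp_iff_of_pos hy).2 ⟨hx, le_rfl⟩, fun _ h => ((mem_Kexp_iff_of_pos hy).1 h).2⟩

lemma isGreatest_Kexp_zero {x : ℝ} (hx : 0 ≤ x) :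
    IsGreatest {z | (x, 0, z) ∈ Kexp} 0 :=
  ⟨mem_Kexp_zero_iff.2 ⟨hx, le_rfl⟩, fun _ h => (mem_Kexp_zero_iff.1 h).2⟩

lemma Params.nu_pos_of_mem (P : Params I) {i : I} {k : ℕ} (hk : k ∈ Icc 1 (P.K i)) :
    0 < P.nu k :=
  P.nu_pos k (mem_Icc.1 hk).1 ((mem_Icc.1 hk).2.trans (le_sup (mem_univ i)))

lemma objCP1_add_single (P : Params I) (d : I → I → ℕ → ℝ) (e : I → I → ℝ)
    (u : I → I → ℕ → ℝ) {i j : I} {k : ℕ} (hj : j ∈ P.Iout i) (hk : k ∈ Icc 1 (P.K i))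
    (c : ℝ) :
    objCP1 P d e (fun i' j' k' => u i' j' k' + if i' = i ∧ j' = j ∧ k' = k then c else 0) =
      objCP1 P d e u + P.nu k * c := by
  simp only [objCP1, mul_add, sub_add_eq_add_sub, sum_sub_distrib, sum_add_distrib, mul_ite,
    mul_zero, ite_and, sum_ite_irrel, sum_const_zero, sum_ite_eq', mem_univ, if_true, hj, hk]

lemma CP1Optimal.isGreatest_C2 {P : Params I} {a : I → ℝ} {d : I → I → ℕ → ℝ}
    {e f : I → I → ℝ} {u : I → I → ℕ → ℝ} {q : I → ℕ → ℝ}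
    (hopt : CP1Optimal P a d e f u q) {i j : I} (hj : j ∈ P.Iout i) {k : ℕ}
    (hk : k ∈ Icc 1 (P.K i)) :
    IsGreatest {z | (P.lam i j * q i k - P.nu k * d i j k, P.nu k * d i j k, z) ∈ Kexp}
      (P.beta i j * P.nu k * u i j k - P.alpha i j k * P.nu k * d i j k) := by
  obtain ⟨⟨hshared, hq, hC1, hC2⟩, hmax⟩ := hopt
  refine ⟨hC2 i j hj k hk, fun z hz => ?_⟩
  by_contra! hlt
  have hβν : 0 < P.beta i j * P.nu k := mul_pos (P.beta_pos i j hj) (P.nu_pos_of_mem hk)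
  set c := (z + P.alpha i j k * P.nu k * d i j k) / (P.beta i j * P.nu k) - u i j k
  have hc : 0 < c := by
    rw [sub_pos, lt_div_iff₀ hβν]
    linarith
  set u' : I → I → ℕ → ℝ :=
    fun i' j' k' => u i' j' k' + if i' = i ∧ j' = j ∧ k' = k then c else 0
  have hcoord : P.beta i j * P.nu k * u' i j k - P.alpha i j k * P.nu k * d i j k = z := by
    simp only [u', c, and_self, if_true, add_sub_cancel]
    rw [mul_div_cancel₀ _ hβν.ne']
    ring
  have hfeas' : CP1Feasible P a d e f u' q := by
    refine ⟨hshared, hq, hC1, fun i' j' hj' k' hk' => ?_⟩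
    by_cases h : i' = i ∧ j' = j ∧ k' = k
    · obtain ⟨rfl, rfl, rfl⟩ := h
      rw [hcoord]
      exact hz
    · simpa only [u', h, if_false, add_zero] using hC2 i' j' hj' k' hk'
  have hobj := hmax a d e f u' q hfeas'
  rw [objCP1_add_single P d e u hj hk c] at hobj
  linarith [mul_pos (P.nu_pos_of_mem hk) hc]

/-- Lemma 3: Condition (ii) holds at every optimal solution of CP1. -/
theorem CondII_at_CP1_optimum {I : Type} [Fintype I] [DecidableEq I] (P : Params I)
    (a : I → ℝ) (d : I → I → ℕ → ℝ) (e f : I → I → ℝ)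
    (u : I → I → ℕ → ℝ) (q : I → ℕ → ℝ)
    (hopt : CP1Optimal P a d e f u q) :
    CondII P d u q := by
  intro i j hj k hk
  have hgreatest := hopt.isGreatest_C2 hj hk
  have hν := P.nu_pos_of_mem hk
  have hβ := P.beta_pos i j hj
  have hd₀ : 0 ≤ d i j k := hopt.1.1.2.1 i j hj k hk
  rcases hd₀.eq_or_lt with hd | hd
  · rw [← hd, mul_zero] at hgreatest
    have hx := (mem_Kexp_zero_iff.1 hgreatest.1).1
    have hu := hgreatest.unique (isGreatest_Kexp_zero hx)
    refine Or.inl ⟨hd.symm, ?_⟩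
    simpa [hβ.ne', hν.ne'] using hu
  · have hνd := mul_pos hν hd
    have hx := (mem_Kexp_iff_of_pos hνd |>.1 hgreatest.1).1
    have hu := hgreatest.unique (isGreatest_Kexp_of_pos hx hνd)
    refine Or.inr ⟨hd, ?_⟩
    rw [← inv_div, Real.log_inv]
    linarith

end
end

section
/- At every optimal solution (ā*, ē*, f̄*, u*, q*) of problem CP2, for each (i,j)∈IJ the following dichotomy holds: either (f̄*_{ij}=0 and u*_{ij}=0), or (f̄*_{ij}>0 and μ_{ij} f̄*_{ij}·log(μ_{ij} f̄*_{ij}/(λ_{ij} q*_i − μ_{ij} f̄*_{ij})) = α_{ij0} μ_{ij} f̄*_{ij} − β_{ij} μ_{ij} u*_{ij}). -/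
open Finset

noncomputable section

/-- Network primitives and parameter assumptions for the ride-hailing model without
en-route time, underlying problems FP2 and CP2. -/
structure Params2 (I : Type) [Fintype I] [DecidableEq I] where
  nonemptyI : Nonempty I
  /-- destination zones reachable with a passenger: `j ∈ Iout i ↔ (i,j) ∈ IJ` -/
  Iout : I → Finset I
  /-- destination zones reachable empty: `j ∈ Itil i ↔ (i,j) ∈ ĨJ` -/
  Itil : I → Finset I
  IJ_nonempty : ∃ i j, j ∈ Iout i
  connected : ∀ i j : I, ∃ (n : ℕ) (c : ℕ → I),
    c 0 = i ∧ c n = j ∧ ∀ m, m < n → c (m + 1) ∈ Itil (c m)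
  lam : I → I → ℝ
  mu : I → I → ℝ
  mutil : I → I → ℝ
  beta : I → I → ℝ
  /-- `alpha i j` is the parameter `α_{ij0}` -/
  alpha : I → I → ℝ
  /-- `phi i j` is the cost `φ_{ij0}` -/
  phi : I → I → ℝ
  psi : I → I → ℝ
  lam_pos : ∀ i j, j ∈ Iout i → 0 < lam i j
  mu_pos : ∀ i j, j ∈ Iout i → 0 < mu i j
  mutil_pos : ∀ i j, j ∈ Itil i → 0 < mutil i j
  beta_pos : ∀ i j, j ∈ Iout i → 0 < beta i j

variable {I : Type} [Fintype I] [DecidableEq I]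

/-- Sign restrictions and constraints (G4), (G5), shared by FP2 and CP2. -/
def Shared2 (P : Params2 I) (a : I → ℝ) (e f : I → I → ℝ) (q : I → ℝ) : Prop :=
  (∀ i, 0 ≤ a i) ∧
  (∀ i j, j ∈ P.Itil i → 0 ≤ e i j) ∧
  (∀ i j, j ∈ P.Iout i → 0 ≤ f i j) ∧
  (∀ i, 0 ≤ q i ∧ q i ≤ 1) ∧
  -- (G4)
  (∀ i : I,
    (∑ j ∈ Finset.univ.filter (fun j => i ∈ P.Itil j), P.mutil j i * e j i) +
    (∑ j ∈ Finset.univ.filter (fun j => i ∈ P.Iout j), P.mu j i * f j i) =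
    (∑ j ∈ P.Itil i, P.mutil i j * e i j) +
    (∑ j ∈ P.Iout i, P.mu i j * f i j)) ∧
  -- (G5)
  ((∑ i, a i) + (∑ i, ∑ j ∈ P.Itil i, e i j) +
    (∑ i, ∑ j ∈ P.Iout i, f i j) = 1)

/-- Feasibility for problem FP2. -/
def FP2Feasible (P : Params2 I) (a : I → ℝ) (e f : I → I → ℝ)
    (x p : I → I → ℝ) (q : I → ℝ) : Prop :=
  Shared2 P a e f q ∧
  -- (G1)
  (∀ i, (1 - q i) * a i = 0) ∧
  -- (G2)
  (∀ i j, j ∈ P.Iout i →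
    p i j = Real.exp (P.alpha i j - P.beta i j * x i j) /
      (1 + Real.exp (P.alpha i j - P.beta i j * x i j))) ∧
  -- (G3)
  (∀ i j, j ∈ P.Iout i → P.lam i j * q i * p i j = P.mu i j * f i j)

/-- Feasibility for problem CP2. -/
def CP2Feasible (P : Params2 I) (a : I → ℝ) (e f : I → I → ℝ)
    (u : I → I → ℝ) (q : I → ℝ) : Prop :=
  Shared2 P a e f q ∧
  -- (H1)
  (∀ i j, j ∈ P.Iout i →
    ((P.lam i j * q i - P.mu i j * f i j, P.mu i j * f i j,
      P.beta i j * P.mu i j * u i j - P.alpha i j * P.mu i j * f i j) :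
      ℝ × ℝ × ℝ) ∈ Kexp)

/-- The FP2 objective Φ_FP2. -/
def objFP2 (P : Params2 I) (e f x : I → I → ℝ) : ℝ :=
  (∑ i, ∑ j ∈ P.Iout i, P.mu i j * f i j * (x i j - P.phi i j)) -
  ∑ i, ∑ j ∈ P.Itil i, P.psi i j * P.mutil i j * e i j

/-- The CP2 objective Φ_CP2. -/
def objCP2 (P : Params2 I) (e f u : I → I → ℝ) : ℝ :=
  (∑ i, ∑ j ∈ P.Iout i, (P.mu i j * u i j - P.mu i j * P.phi i j * f i j)) -
  ∑ i, ∑ j ∈ P.Itil i, P.psi i j * P.mutil i j * e i j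

/-- Optimality for problem CP2. -/
def CP2Optimal (P : Params2 I) (a : I → ℝ) (e f u : I → I → ℝ) (q : I → ℝ) : Prop :=
  CP2Feasible P a e f u q ∧
  ∀ a' e' f' u' q', CP2Feasible P a' e' f' u' q' →
    objCP2 P e' f' u' ≤ objCP2 P e f u

/-- Optimality for problem FP2. -/
def FP2Optimal (P : Params2 I) (a : I → ℝ) (e f x p : I → I → ℝ) (q : I → ℝ) : Prop :=
  FP2Feasible P a e f x p q ∧
  ∀ a' e' f' x' p' q', FP2Feasible P a' e' f' x' p' q' →
    objFP2 P e' f' x' ≤ objFP2 P e f x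

/-!
The variable `u_ij` occurs only in (H1), whose admissible values are bounded above, and in the
objective with positive coefficient `μ_ij`. Raising `u_ij` alone keeps a point feasible, so at an
optimum (H1) is tight: `β μ u − α μ f̄ = μ f̄ · log ((λ q − μ f̄) / (μ f̄))`, where on the face
`μ f̄ = 0` of `K_exp` the right side is `0` (Lean's `0 * log _ = 0`). Both alternatives of the
dichotomy are read off this equation.
-/

namespace Kexp

theorem le_mul_log {x y z : ℝ} (h : (x, y, z) ∈ Kexp) : z ≤ y * Real.log (x / y) := by
  rcases h with ⟨-, -, hz⟩ | ⟨-, rfl, hz⟩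
  · exact hz
  · simpa using hz

theorem mem_of_le_mul_log {x y z z' : ℝ} (h : (x, y, z) ∈ Kexp)
    (hz' : z' ≤ y * Real.log (x / y)) : (x, y, z') ∈ Kexp := by
  rcases h with ⟨hx, hy, -⟩ | ⟨hx, rfl, -⟩
  · exact Or.inl ⟨hx, hy, hz'⟩
  · exact Or.inr ⟨hx, rfl, by simpa using hz'⟩

end Kexp

theorem objCP2_update (P : Params2 I) (e f u : I → I → ℝ) {i j : I} (hj : j ∈ P.Iout i)
    (t : ℝ) :
    objCP2 P e f (Function.update u i (Function.update (u i) j t)) =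
      objCP2 P e f u + P.mu i j * (t - u i j) := by
  have hdiff : ∀ i' j', P.mu i' j' * Function.update u i (Function.update (u i) j t) i' j' =
      P.mu i' j' * u i' j' +
        if i' = i then (if j' = j then P.mu i j * (t - u i j) else 0) else 0 := by
    intro i' j'
    by_cases hi : i' = i <;> by_cases hj' : j' = j <;> simp [hi, hj']; ring
  simp only [objCP2, hdiff, add_sub_right_comm _ (ite _ _ _), Finset.sum_add_distrib]
  simp [Finset.sum_ite_eq', hj]
  ring

section CP2Optimal

variable {P : Params2 I} {a : I → ℝ} {e f u : I → I → ℝ} {q : I → ℝ}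

theorem CP2Feasible.update_u (hfeas : CP2Feasible P a e f u q) {i j : I} {t : ℝ}
    (ht : ((P.lam i j * q i - P.mu i j * f i j, P.mu i j * f i j,
      P.beta i j * P.mu i j * t - P.alpha i j * P.mu i j * f i j) : ℝ × ℝ × ℝ) ∈ Kexp) :
    CP2Feasible P a e f (Function.update u i (Function.update (u i) j t)) q := by
  refine ⟨hfeas.1, fun i' j' hj' => ?_⟩
  by_cases hij : i' = i ∧ j' = j
  · obtain ⟨rfl, rfl⟩ := hij
    simpa using ht
  · have hu : Function.update u i (Function.update (u i) j t) i' j' = u i' j' := by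
      by_cases hi : i' = i
      · subst hi; simp [show j' ≠ j from fun h => hij ⟨rfl, h⟩]
      · simp [hi]
    rw [hu]
    exact hfeas.2 i' j' hj'

theorem CP2Optimal.le_of_mem_Kexp (hopt : CP2Optimal P a e f u q) {i j : I}
    (hj : j ∈ P.Iout i) {t : ℝ}
    (ht : ((P.lam i j * q i - P.mu i j * f i j, P.mu i j * f i j,
      P.beta i j * P.mu i j * t - P.alpha i j * P.mu i j * f i j) : ℝ × ℝ × ℝ) ∈ Kexp) :
    t ≤ u i j := by
  have hobj := hopt.2 _ _ _ _ _ (hopt.1.update_u ht)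
  rw [objCP2_update P e f u hj] at hobj
  nlinarith [P.mu_pos i j hj]

theorem CP2Optimal.H1_tight (hopt : CP2Optimal P a e f u q) {i j : I} (hj : j ∈ P.Iout i) :
    P.beta i j * P.mu i j * u i j - P.alpha i j * P.mu i j * f i j =
      P.mu i j * f i j * Real.log ((P.lam i j * q i - P.mu i j * f i j) / (P.mu i j * f i j)) := by
  set L := P.mu i j * f i j * Real.log ((P.lam i j * q i - P.mu i j * f i j) / (P.mu i j * f i j))
  have hmem := hopt.1.2 i j hj
  have hβμ : 0 < P.beta i j * P.mu i j := mul_pos (P.beta_pos i j hj) (P.mu_pos i j hj)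
  set t := (L + P.alpha i j * P.mu i j * f i j) / (P.beta i j * P.mu i j)
  have ht : P.beta i j * P.mu i j * t - P.alpha i j * P.mu i j * f i j = L := by
    rw [mul_div_cancel₀ _ hβμ.ne', add_sub_cancel_right]
  have htu : t ≤ u i j := hopt.le_of_mem_Kexp hj (Kexp.mem_of_le_mul_log hmem ht.le)
  have hscaled : P.beta i j * P.mu i j * t ≤ P.beta i j * P.mu i j * u i j :=
    mul_le_mul_of_nonneg_left htu hβμ.le
  exact le_antisymm (Kexp.le_mul_log hmem) (by linarith)

end CP2Optimal

/-- At every optimal solution of CP2 and every `(i,j) ∈ IJ`: either `f̄*_{ij} = 0` and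
`u*_{ij} = 0`, or `f̄*_{ij} > 0` and the logit-logarithm equation holds. -/
theorem CP2_optimal_dichotomy {I : Type} [Fintype I] [DecidableEq I] (P : Params2 I)
    (a : I → ℝ) (e f u : I → I → ℝ) (q : I → ℝ)
    (hopt : CP2Optimal P a e f u q) :
    ∀ i j, j ∈ P.Iout i →
      (f i j = 0 ∧ u i j = 0) ∨
      (0 < f i j ∧
        P.mu i j * f i j *
          Real.log (P.mu i j * f i j / (P.lam i j * q i - P.mu i j * f i j)) =
        P.alpha i j * P.mu i j * f i j - P.beta i j * P.mu i j * u i j) := by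
  intro i j hj
  have htight := hopt.H1_tight hj
  rcases (hopt.1.1.2.2.1 i j hj).eq_or_lt with hf | hf
  · left
    refine ⟨hf.symm, ?_⟩
    rw [← hf] at htight
    simpa [(P.beta_pos i j hj).ne', (P.mu_pos i j hj).ne'] using htight
  · right
    refine ⟨hf, ?_⟩
    rw [← inv_div, Real.log_inv]
    linarith

end
end

section
/- There exists a feasible point of problem CP2 whose objective value Φ_CP2 is strictly positive; consequently, every optimal solution of CP2 has strictly positive objective value. -/
/-!
Fix a passenger arc `(i₀, j₀)` and, by connectivity, a walk of empty arcs from `j₀` back to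
`i₀`. Circulating drivers at rate `t` around this cycle (all remaining mass idle at `i₀`) is
feasible for small `t > 0`. On the passenger arc the exponential cone allows the revenue
`t (α + log ((λ - t) / t)) / β`, whose logarithm tends to `+∞` as `t → 0⁺`, whereas every cost is
linear in `t`; so the objective is positive for small `t`, and an optimal value dominates it.
-/

open Finset

noncomputable section

variable {I : Type} [Fintype I] [DecidableEq I]

section WalkCount

variable {V : Type*} [DecidableEq V] (c : ℕ → V) (n : ℕ)

def walkArcCount (i j : V) : ℕ := #{m ∈ range n | c m = i ∧ c (m + 1) = j}

variable {c n} {A : V → Finset V}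

lemma sum_walkArcCount_out (hc : ∀ m < n, c (m + 1) ∈ A (c m)) (v : V) :
    ∑ j ∈ A v, walkArcCount c n v j = #{m ∈ range n | c m = v} := by
  rw [card_eq_sum_card_fiberwise (f := fun m => c (m + 1)) (t := A v)]
  · refine sum_congr rfl fun j _ => ?_
    rw [walkArcCount, filter_filter]
  · intro m hm
    rw [mem_coe, mem_filter, mem_range] at hm
    exact hm.2 ▸ hc m hm.1

lemma sum_walkArcCount_in [Fintype V] (hc : ∀ m < n, c (m + 1) ∈ A (c m)) (v : V) :
    ∑ j ∈ univ.filter (fun j => v ∈ A j), walkArcCount c n j v =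
      #{m ∈ range n | c (m + 1) = v} := by
  rw [card_eq_sum_card_fiberwise (f := c) (t := univ.filter (fun j => v ∈ A j))]
  · refine sum_congr rfl fun j _ => ?_
    rw [walkArcCount, filter_filter]
    simp only [and_comm]
  · intro m hm
    rw [mem_coe, mem_filter, mem_range] at hm
    rw [mem_coe, mem_filter, ← hm.2]
    exact ⟨mem_univ _, hc m hm.1⟩

lemma card_visits_succ_add (v : V) :
    #{m ∈ range n | c (m + 1) = v} + (if c 0 = v then 1 else 0) =
      #{m ∈ range n | c m = v} + (if c n = v then 1 else 0) := by
  simp only [card_filter]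
  rw [← sum_range_succ' (fun m => if c m = v then 1 else 0), sum_range_succ]

lemma walkArcCount_balance [Fintype V] (hc : ∀ m < n, c (m + 1) ∈ A (c m)) (v : V) :
    ∑ j ∈ univ.filter (fun j => v ∈ A j), walkArcCount c n j v + (if c 0 = v then 1 else 0) =
      ∑ j ∈ A v, walkArcCount c n v j + (if c n = v then 1 else 0) := by
  rw [sum_walkArcCount_in hc, sum_walkArcCount_out hc, card_visits_succ_add]

end WalkCount

def IsUnitFlow {V : Type*} [Fintype V] [DecidableEq V] (A : V → Finset V) (N : V → V → ℝ)
    (s d : V) : Prop :=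
  (∀ i j, 0 ≤ N i j) ∧ ∀ v,
    ∑ j ∈ univ.filter (fun j => v ∈ A j), N j v + (if s = v then (1 : ℝ) else 0) =
      ∑ j ∈ A v, N v j + (if d = v then (1 : ℝ) else 0)

lemma isUnitFlow_walkArcCount {V : Type*} [Fintype V] [DecidableEq V] {A : V → Finset V}
    {c : ℕ → V} {n : ℕ} (hc : ∀ m < n, c (m + 1) ∈ A (c m)) :
    IsUnitFlow A (fun i j => (walkArcCount c n i j : ℝ)) (c 0) (c n) :=
  ⟨fun _ _ => Nat.cast_nonneg _, fun v => by
    dsimp only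
    exact_mod_cast walkArcCount_balance hc v⟩

open Filter Topology in
lemma tendsto_log_sub_div_nhdsGT_zero {l : ℝ} (hl : 0 < l) :
    Tendsto (fun t => Real.log ((l - t) / t)) (𝓝[>] 0) atTop := by
  refine Real.tendsto_log_atTop.comp ?_
  have h := tendsto_atTop_add_const_right _ (-1) ((tendsto_inv_nhdsGT_zero).const_mul_atTop hl)
  refine h.congr' ?_
  filter_upwards [self_mem_nhdsWithin] with t (ht : 0 < t)
  field_simp
  ring

open Filter Topology in
lemma exists_pos_lt_log_sub_div {l : ℝ} (hl : 0 < l) (C M : ℝ) :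
    ∃ t, 0 < t ∧ t < l ∧ t * C < 1 ∧ M < Real.log ((l - t) / t) := by
  have hIoo : ∀ᶠ t in 𝓝[>] (0 : ℝ), t ∈ Set.Ioo 0 l := Ioo_mem_nhdsGT hl
  have hC : ∀ᶠ t in 𝓝[>] (0 : ℝ), t * C < 1 :=
    (((continuous_mul_const C).tendsto' 0 0 (zero_mul C)).mono_left
      nhdsWithin_le_nhds).eventually (gt_mem_nhds one_pos)
  obtain ⟨t, ⟨ht0, htl⟩, htC, htM⟩ :=
    (hIoo.and (hC.and ((tendsto_log_sub_div_nhdsGT_zero hl).eventually_gt_atTop M))).exists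
  exact ⟨t, ht0, htl, htC, htM⟩

lemma sum_sum_eq_arc {ι M : Type*} [Fintype ι] [AddCommMonoid M] {A : ι → Finset ι}
    {g : ι → ι → M} {i₀ j₀ : ι} (h₀ : j₀ ∈ A i₀) (hg : ∀ i j, ¬(i = i₀ ∧ j = j₀) → g i j = 0) :
    ∑ i, ∑ j ∈ A i, g i j = g i₀ j₀ := by
  rw [sum_eq_single_of_mem i₀ (mem_univ _), sum_eq_single_of_mem j₀ h₀]
  · exact fun j _ hj => hg _ _ fun h => hj h.2
  · exact fun i _ hi => sum_eq_zero fun j _ => hg _ _ fun h => hi h.1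

lemma shared2_piSingle_of_mass_le_one (P : Params2 I) (i₀ : I) {e f : I → I → ℝ} {q : I → ℝ}
    (he : ∀ i j, j ∈ P.Itil i → 0 ≤ e i j) (hf : ∀ i j, j ∈ P.Iout i → 0 ≤ f i j)
    (hq : ∀ i, 0 ≤ q i ∧ q i ≤ 1)
    (hbal : ∀ i : I,
      (∑ j ∈ univ.filter (fun j => i ∈ P.Itil j), P.mutil j i * e j i) +
      (∑ j ∈ univ.filter (fun j => i ∈ P.Iout j), P.mu j i * f j i) =
      (∑ j ∈ P.Itil i, P.mutil i j * e i j) + (∑ j ∈ P.Iout i, P.mu i j * f i j))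
    (hmass : (∑ i, ∑ j ∈ P.Itil i, e i j) + (∑ i, ∑ j ∈ P.Iout i, f i j) ≤ 1) :
    Shared2 P (Pi.single i₀ (1 - ((∑ i, ∑ j ∈ P.Itil i, e i j) + ∑ i, ∑ j ∈ P.Iout i, f i j)))
      e f q := by
  refine ⟨?_, he, hf, hq, hbal, ?_⟩
  · intro i
    rw [Pi.single_apply]
    split_ifs <;> linarith
  · rw [sum_pi_single', if_pos (mem_univ _)]
    ring

section Cycle

variable (P : Params2 I) (i₀ j₀ : I) (N : I → I → ℝ) (t : ℝ)

def cycleLoaded : I → I → ℝ := fun i j => if i = i₀ ∧ j = j₀ then t / P.mu i₀ j₀ else 0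

def cycleEmpty : I → I → ℝ := fun i j => t * N i j / P.mutil i j

-- saturates the exponential cone (H1) on the arc `(i₀, j₀)`
def cycleU : I → I → ℝ := fun i j =>
  if i = i₀ ∧ j = j₀ then
    t * (P.alpha i₀ j₀ + Real.log ((P.lam i₀ j₀ - t) / t)) / (P.beta i₀ j₀ * P.mu i₀ j₀)
  else 0

variable {P i₀ j₀ N t}

lemma cycleLoaded_nonneg (hj₀ : j₀ ∈ P.Iout i₀) (ht : 0 ≤ t) (i j : I) :
    0 ≤ cycleLoaded P i₀ j₀ t i j := by
  unfold cycleLoaded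
  split_ifs
  exacts [div_nonneg ht (P.mu_pos _ _ hj₀).le, le_rfl]

lemma cycleEmpty_nonneg (hN : ∀ i j, 0 ≤ N i j) (ht : 0 ≤ t) {i j : I} (hij : j ∈ P.Itil i) :
    0 ≤ cycleEmpty P N t i j :=
  div_nonneg (mul_nonneg ht (hN i j)) (P.mutil_pos _ _ hij).le

lemma mu_mul_cycleLoaded (hj₀ : j₀ ∈ P.Iout i₀) (i j : I) :
    P.mu i j * cycleLoaded P i₀ j₀ t i j = if i = i₀ ∧ j = j₀ then t else 0 := by
  unfold cycleLoaded
  split_ifs with h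
  · obtain ⟨rfl, rfl⟩ := h
    exact mul_div_cancel₀ t (P.mu_pos _ _ hj₀).ne'
  · exact mul_zero _

lemma mutil_mul_cycleEmpty {i j : I} (hij : j ∈ P.Itil i) :
    P.mutil i j * cycleEmpty P N t i j = t * N i j :=
  mul_div_cancel₀ _ (P.mutil_pos _ _ hij).ne'

lemma sum_mu_mul_cycleLoaded_out (hj₀ : j₀ ∈ P.Iout i₀) (v : I) :
    ∑ j ∈ P.Iout v, P.mu v j * cycleLoaded P i₀ j₀ t v j = t * if i₀ = v then 1 else 0 := by
  simp only [mu_mul_cycleLoaded hj₀]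
  split_ifs with h
  · subst h
    simp [hj₀]
  · simp [Ne.symm h]

lemma sum_mu_mul_cycleLoaded_in (hj₀ : j₀ ∈ P.Iout i₀) (v : I) :
    ∑ j ∈ univ.filter (fun j => v ∈ P.Iout j), P.mu j v * cycleLoaded P i₀ j₀ t j v =
      t * if j₀ = v then 1 else 0 := by
  simp only [mu_mul_cycleLoaded hj₀]
  split_ifs with h
  · subst h
    simp [hj₀]
  · simp [Ne.symm h]

lemma cycle_balance (hj₀ : j₀ ∈ P.Iout i₀) (hN : IsUnitFlow P.Itil N j₀ i₀) (v : I) :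
    (∑ j ∈ univ.filter (fun j => v ∈ P.Itil j), P.mutil j v * cycleEmpty P N t j v) +
    (∑ j ∈ univ.filter (fun j => v ∈ P.Iout j), P.mu j v * cycleLoaded P i₀ j₀ t j v) =
    (∑ j ∈ P.Itil v, P.mutil v j * cycleEmpty P N t v j) +
    (∑ j ∈ P.Iout v, P.mu v j * cycleLoaded P i₀ j₀ t v j) := by
  rw [sum_congr rfl fun j hj => mutil_mul_cycleEmpty (mem_filter.1 hj).2,
    sum_congr rfl fun j hj => mutil_mul_cycleEmpty hj, ← mul_sum, ← mul_sum,
    sum_mu_mul_cycleLoaded_in hj₀, sum_mu_mul_cycleLoaded_out hj₀]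
  linear_combination t * hN.2 v

lemma cycle_mass (hj₀ : j₀ ∈ P.Iout i₀) :
    (∑ i, ∑ j ∈ P.Itil i, cycleEmpty P N t i j) +
        (∑ i, ∑ j ∈ P.Iout i, cycleLoaded P i₀ j₀ t i j) =
      t * ((∑ i, ∑ j ∈ P.Itil i, N i j / P.mutil i j) + 1 / P.mu i₀ j₀) := by
  rw [sum_sum_eq_arc (g := cycleLoaded P i₀ j₀ t) hj₀ fun i j h => if_neg h, cycleLoaded,
    if_pos ⟨rfl, rfl⟩, mul_add, mul_sum]
  simp only [cycleEmpty, mul_sum, mul_div_assoc, mul_one_div]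

lemma cycle_mem_Kexp (hj₀ : j₀ ∈ P.Iout i₀) (ht : 0 < t) (htl : t < P.lam i₀ j₀)
    {i j : I} (hij : j ∈ P.Iout i) :
    ((P.lam i j * 1 - P.mu i j * cycleLoaded P i₀ j₀ t i j, P.mu i j * cycleLoaded P i₀ j₀ t i j,
      P.beta i j * P.mu i j * cycleU P i₀ j₀ t i j -
        P.alpha i j * P.mu i j * cycleLoaded P i₀ j₀ t i j) : ℝ × ℝ × ℝ) ∈ Kexp := by
  by_cases h : i = i₀ ∧ j = j₀
  · obtain ⟨rfl, rfl⟩ := h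
    have hf : P.mu i j * cycleLoaded P i j t i j = t := by
      rw [mu_mul_cycleLoaded hj₀, if_pos ⟨rfl, rfl⟩]
    have hu : P.beta i j * P.mu i j * cycleU P i j t i j =
        t * (P.alpha i j + Real.log ((P.lam i j - t) / t)) := by
      have hβ := (P.beta_pos _ _ hj₀).ne'
      have hμ := (P.mu_pos _ _ hj₀).ne'
      rw [cycleU, if_pos ⟨rfl, rfl⟩]
      field_simp
    refine Or.inl ⟨?_, ?_, ?_⟩ <;> simp only [mul_assoc (P.alpha i j), hf, hu, mul_one]
    · linarith
    · exact ht
    · linarith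
  · have hf : cycleLoaded P i₀ j₀ t i j = 0 := if_neg h
    have hu : cycleU P i₀ j₀ t i j = 0 := if_neg h
    refine Or.inr ⟨?_, ?_, ?_⟩ <;> simp [hf, hu, (P.lam_pos i j hij).le]

lemma objCP2_cycle (hj₀ : j₀ ∈ P.Iout i₀) :
    objCP2 P (cycleEmpty P N t) (cycleLoaded P i₀ j₀ t) (cycleU P i₀ j₀ t) =
      t / P.beta i₀ j₀ * (P.alpha i₀ j₀ + Real.log ((P.lam i₀ j₀ - t) / t) -
        P.beta i₀ j₀ * (P.phi i₀ j₀ + ∑ i, ∑ j ∈ P.Itil i, P.psi i j * N i j)) := by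
  have hβ := (P.beta_pos _ _ hj₀).ne'
  have hμ := (P.mu_pos _ _ hj₀).ne'
  have hψ : ∑ i, ∑ j ∈ P.Itil i, P.psi i j * P.mutil i j * cycleEmpty P N t i j =
      t * ∑ i, ∑ j ∈ P.Itil i, P.psi i j * N i j := by
    simp only [mul_sum]
    refine sum_congr rfl fun i _ => sum_congr rfl fun j hj => ?_
    rw [mul_assoc, mutil_mul_cycleEmpty hj, mul_left_comm]
  rw [objCP2, hψ, sum_sum_eq_arc hj₀ fun i j h => by simp [cycleU, cycleLoaded, h]]
  simp only [cycleU, cycleLoaded, and_self, if_true]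
  field_simp
  ring

end Cycle

/-- There is a feasible point of CP2 with strictly positive objective value; consequently,
every optimal solution of CP2 has strictly positive objective value. -/
theorem CP2_positive_value {I : Type} [Fintype I] [DecidableEq I] (P : Params2 I) :
    (∃ (a : I → ℝ) (e f u : I → I → ℝ) (q : I → ℝ),
      CP2Feasible P a e f u q ∧ 0 < objCP2 P e f u) ∧
    (∀ (a : I → ℝ) (e f u : I → I → ℝ) (q : I → ℝ),
      CP2Optimal P a e f u q → 0 < objCP2 P e f u) := by
  obtain ⟨i₀, j₀, hj₀⟩ := P.IJ_nonempty
  obtain ⟨n, c, hc0, hcn, hc⟩ := P.connected j₀ i₀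
  set N : I → I → ℝ := fun i j => walkArcCount c n i j
  have hN : IsUnitFlow P.Itil N j₀ i₀ := hc0 ▸ hcn ▸ isUnitFlow_walkArcCount hc
  obtain ⟨t, ht, htl, hmass, hlog⟩ := exists_pos_lt_log_sub_div (P.lam_pos _ _ hj₀)
    ((∑ i, ∑ j ∈ P.Itil i, N i j / P.mutil i j) + 1 / P.mu i₀ j₀)
    (P.beta i₀ j₀ * (P.phi i₀ j₀ + ∑ i, ∑ j ∈ P.Itil i, P.psi i j * N i j) - P.alpha i₀ j₀)
  have hfeas : CP2Feasible P _ (cycleEmpty P N t) (cycleLoaded P i₀ j₀ t) (cycleU P i₀ j₀ t)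
      (fun _ => 1) :=
    ⟨shared2_piSingle_of_mass_le_one P i₀ (fun _ _ => cycleEmpty_nonneg hN.1 ht.le)
      (fun i j _ => cycleLoaded_nonneg hj₀ ht.le i j) (fun _ => ⟨zero_le_one, le_rfl⟩)
      (cycle_balance hj₀ hN) (cycle_mass hj₀ ▸ hmass.le),
    fun _ _ => cycle_mem_Kexp hj₀ ht htl⟩
  have hpos : 0 < objCP2 P (cycleEmpty P N t) (cycleLoaded P i₀ j₀ t) (cycleU P i₀ j₀ t) := by
    rw [objCP2_cycle hj₀]
    exact mul_pos (div_pos ht (P.beta_pos _ _ hj₀)) (by linarith)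
  exact ⟨⟨_, _, _, _, _, hfeas, hpos⟩,
    fun _ _ _ _ _ hopt => hpos.trans_le (hopt.2 _ _ _ _ _ hfeas)⟩

end
end

section
/- At every optimal solution (ā*, ē*, f̄*, u*, q*) of problem CP2, one has f̄*_{ij}>0 for every (i,j)∈IJ, and q*_i=1 for every i∈I such that (i,j)∈IJ for some j∈I. -/
open Finset

noncomputable section

variable {I : Type} [Fintype I] [DecidableEq I]

/-!
Both claims follow by exhibiting a strictly better feasible point whenever they fail.

If `q_i < 1` while `f̄_{ij} > 0`, raising `q_i` to `1` strictly enlarges the first coordinate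
of the cone constraint (H1) at `(i, j)`, whose second coordinate `μ_{ij} f̄_{ij}` is positive, so
`u_{ij}` can be increased.

If `f̄_{i₀j₀} = 0`, then (H1) forces `u_{i₀j₀} ≤ 0`. Shrink the whole solution by a factor
`1 - t`, send a flow `ε` along `(i₀, j₀)` and route it back empty along an `ĨJ`-path from `j₀`
to `i₀`, which preserves (G4); `t` is proportional to `ε` and chosen so that (G5) holds, and
`q` is set to `1`. The new arc may then earn `u = (ε/β)(α + log((λ - με)/(με)))`. Since this
grows like `ε log(1/ε)` while all other changes of the objective are `O(ε)`, a small `ε`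
gives a strictly better point.
-/

open Filter Topology

lemma smul_mem_Kexp {x y z : ℝ} (hv : (x, y, z) ∈ Kexp) {t : ℝ} (ht : 0 < t) :
    (t * x, t * y, t * z) ∈ Kexp := by
  rcases hv with ⟨h1, h2, h3⟩ | ⟨h1, h2, h3⟩
  · refine Or.inl ⟨by positivity, by positivity, ?_⟩
    show t * z ≤ t * y * Real.log (t * x / (t * y))
    rw [mul_div_mul_left _ _ ht.ne', mul_assoc]
    exact mul_le_mul_of_nonneg_left h3 ht.le
  · exact Or.inr ⟨by positivity, mul_eq_zero_of_right t h2,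
      mul_nonpos_of_nonneg_of_nonpos ht.le h3⟩

lemma mem_Kexp_of_fst_le {x y z x' : ℝ} (hv : (x, y, z) ∈ Kexp) (hx : x ≤ x') :
    (x', y, z) ∈ Kexp := by
  rcases hv with ⟨h1, h2, h3⟩ | ⟨h1, h2, h3⟩
  · refine Or.inl ⟨h1.trans_le hx, h2, h3.trans ?_⟩
    gcongr
  · exact Or.inr ⟨h1.trans hx, h2, h3⟩

lemma exists_pos_add_mem_Kexp_of_fst_lt {x y z x' : ℝ} (hv : (x, y, z) ∈ Kexp) (hy : 0 < y)
    (hx : x < x') : ∃ d > 0, (x', y, z + d) ∈ Kexp := by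
  obtain ⟨h1, -, h3⟩ : 0 < x ∧ 0 < y ∧ z ≤ y * Real.log (x / y) := by
    rcases hv with h | ⟨-, h, -⟩
    · exact h
    · exact absurd h hy.ne'
  refine ⟨y * (Real.log (x' / y) - Real.log (x / y)), mul_pos hy ?_,
    Or.inl ⟨h1.trans hx, hy, by linarith⟩⟩
  exact sub_pos.2 (Real.log_lt_log (by positivity) (by gcongr))

lemma nonpos_of_mk_zero_mem_Kexp {x z : ℝ} (hv : (x, 0, z) ∈ Kexp) : z ≤ 0 := by
  rcases hv with ⟨-, h, -⟩ | ⟨-, -, h⟩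
  · exact absurd h (lt_irrefl 0)
  · exact h

lemma eventually_lt_log_div {l m : ℝ} (hl : 0 < l) (hm : 0 < m) (K : ℝ) :
    ∀ᶠ ε in 𝓝[>] 0, K < Real.log ((l - m * ε) / (m * ε)) := by
  have hnum : Tendsto (fun ε : ℝ => l - m * ε) (𝓝[>] 0) (𝓝 l) := by
    apply tendsto_nhdsWithin_of_tendsto_nhds
    have : Continuous fun ε : ℝ => l - m * ε := by fun_prop
    simpa using this.tendsto 0
  have hden : Tendsto (fun ε : ℝ => (m * ε)⁻¹) (𝓝[>] 0) atTop := by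
    simpa [mul_inv, mul_comm] using
      Tendsto.const_mul_atTop (inv_pos.2 hm) tendsto_inv_nhdsGT_zero
  exact (Real.tendsto_log_atTop.comp (hnum.pos_mul_atTop hl hden)).eventually_gt_atTop K

section Flows

variable {ι : Type*} [DecidableEq ι]

def arcFlow (x y : ι) (r : ℝ) : ι → ι → ℝ := fun i j => if i = x ∧ j = y then r else 0

/-- The flow along the walk `c 0, …, c n` that, measured in the arc weights `W`, carries `κ`
across each traversed arc. -/
def walkFlow (W : ι → ι → ℝ) (c : ℕ → ι) (n : ℕ) (κ : ℝ) : ι → ι → ℝ :=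
  ∑ m ∈ range n, arcFlow (c m) (c (m + 1)) (κ / W (c m) (c (m + 1)))

lemma walkFlow_apply (W : ι → ι → ℝ) (c : ℕ → ι) (n : ℕ) (κ : ℝ) (i j : ι) :
    walkFlow W c n κ i j =
      ∑ m ∈ range n, arcFlow (c m) (c (m + 1)) (κ / W (c m) (c (m + 1))) i j := by
  simp only [walkFlow, Finset.sum_apply]

lemma walkFlow_nonneg {W : ι → ι → ℝ} {c : ℕ → ι} {n : ℕ} {κ : ℝ}
    (hW : ∀ m < n, 0 < W (c m) (c (m + 1))) (hκ : 0 ≤ κ) (i j : ι) :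
    0 ≤ walkFlow W c n κ i j := by
  rw [walkFlow_apply]
  refine Finset.sum_nonneg fun m hm => ?_
  have := hW m (Finset.mem_range.1 hm)
  unfold arcFlow
  split_ifs <;> positivity

variable (S : ι → Finset ι) (V : ι → ι → ℝ)

lemma sum_mul_arcFlow_out {x y : ι} (hxy : y ∈ S x) (r : ℝ) (i : ι) :
    ∑ j ∈ S i, V i j * arcFlow x y r i j = if i = x then V x y * r else 0 := by
  by_cases hi : i = x
  · subst hi
    simp [arcFlow, hxy]
  · simp [arcFlow, hi]

lemma sum_mul_arcFlow_in [Fintype ι] {x y : ι} (hxy : y ∈ S x) (r : ℝ) (i : ι) :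
    ∑ j ∈ univ.filter (fun j => i ∈ S j), V j i * arcFlow x y r j i =
      if i = y then V x y * r else 0 := by
  by_cases hi : i = y
  · subst hi
    simp [arcFlow, hxy]
  · simp [arcFlow, hi]

lemma sum_sum_mul_arcFlow [Fintype ι] {x y : ι} (hxy : y ∈ S x) (r : ℝ) :
    ∑ i, ∑ j ∈ S i, V i j * arcFlow x y r i j = V x y * r := by
  simp only [sum_mul_arcFlow_out S V hxy, Finset.sum_ite_eq', Finset.mem_univ, if_true]

variable {S} (W : ι → ι → ℝ) {c : ℕ → ι} {n : ℕ} (κ : ℝ)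

lemma sum_mul_walkFlow_out (hc : ∀ m < n, c (m + 1) ∈ S (c m)) (i : ι) :
    ∑ j ∈ S i, V i j * walkFlow W c n κ i j =
      ∑ m ∈ range n,
        if i = c m then V (c m) (c (m + 1)) * (κ / W (c m) (c (m + 1))) else 0 := by
  simp only [walkFlow_apply, Finset.mul_sum]
  rw [Finset.sum_comm]
  refine Finset.sum_congr rfl fun m hm => ?_
  rw [sum_mul_arcFlow_out S V (hc m (Finset.mem_range.1 hm))]

lemma sum_mul_walkFlow_in [Fintype ι] (hc : ∀ m < n, c (m + 1) ∈ S (c m)) (i : ι) :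
    ∑ j ∈ univ.filter (fun j => i ∈ S j), V j i * walkFlow W c n κ j i =
      ∑ m ∈ range n,
        if i = c (m + 1) then V (c m) (c (m + 1)) * (κ / W (c m) (c (m + 1))) else 0 := by
  simp only [walkFlow_apply, Finset.mul_sum]
  rw [Finset.sum_comm]
  refine Finset.sum_congr rfl fun m hm => ?_
  rw [sum_mul_arcFlow_in S V (hc m (Finset.mem_range.1 hm))]

lemma sum_sum_mul_walkFlow [Fintype ι] (hc : ∀ m < n, c (m + 1) ∈ S (c m)) :
    ∑ i, ∑ j ∈ S i, V i j * walkFlow W c n κ i j =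
      ∑ m ∈ range n, V (c m) (c (m + 1)) * (κ / W (c m) (c (m + 1))) := by
  simp only [sum_mul_walkFlow_out V W κ hc]
  rw [Finset.sum_comm]
  simp only [Finset.sum_ite_eq', Finset.mem_univ, if_true]

lemma walkFlow_in_sub_out [Fintype ι] (hc : ∀ m < n, c (m + 1) ∈ S (c m))
    (hW : ∀ m < n, W (c m) (c (m + 1)) ≠ 0) (i : ι) :
    ∑ j ∈ univ.filter (fun j => i ∈ S j), W j i * walkFlow W c n κ j i -
      ∑ j ∈ S i, W i j * walkFlow W c n κ i j =
      (if i = c n then κ else 0) - (if i = c 0 then κ else 0) := by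
  rw [sum_mul_walkFlow_in W W κ hc, sum_mul_walkFlow_out W W κ hc, ← Finset.sum_sub_distrib,
    ← Finset.sum_range_sub (fun m => if i = c m then κ else 0)]
  refine Finset.sum_congr rfl fun m hm => ?_
  rw [mul_div_cancel₀ _ (hW m (Finset.mem_range.1 hm))]

end Flows

/-- Constraint (G4). -/
def FlowBalanced (P : Params2 I) (e f : I → I → ℝ) : Prop :=
  ∀ i : I,
    (∑ j ∈ Finset.univ.filter (fun j => i ∈ P.Itil j), P.mutil j i * e j i) +
    (∑ j ∈ Finset.univ.filter (fun j => i ∈ P.Iout j), P.mu j i * f j i) =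
    (∑ j ∈ P.Itil i, P.mutil i j * e i j) +
    (∑ j ∈ P.Iout i, P.mu i j * f i j)

lemma objCP2_smul_add (P : Params2 I) (s : ℝ) (e e₂ f f₂ u u₂ : I → I → ℝ) :
    objCP2 P (s • e + e₂) (s • f + f₂) (s • u + u₂) =
      s * objCP2 P e f u + objCP2 P e₂ f₂ u₂ := by
  have hrev : ∀ i j,
      P.mu i j * (s * u i j + u₂ i j) - P.mu i j * P.phi i j * (s * f i j + f₂ i j) =
        s * (P.mu i j * u i j - P.mu i j * P.phi i j * f i j) +
          (P.mu i j * u₂ i j - P.mu i j * P.phi i j * f₂ i j) := fun i j => by ring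
  have hcost : ∀ i j, P.psi i j * P.mutil i j * (s * e i j + e₂ i j) =
      s * (P.psi i j * P.mutil i j * e i j) + P.psi i j * P.mutil i j * e₂ i j :=
    fun i j => by ring
  simp only [objCP2, Pi.add_apply, Pi.smul_apply, smul_eq_mul, hrev, hcost,
    Finset.sum_add_distrib, ← Finset.mul_sum]
  ring

variable {P : Params2 I} {i₀ j₀ : I}

lemma objCP2_add_arcFlow (hj₀ : j₀ ∈ P.Iout i₀) (e f u : I → I → ℝ) (r : ℝ) :
    objCP2 P e f (u + arcFlow i₀ j₀ r) = objCP2 P e f u + P.mu i₀ j₀ * r := by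
  have := objCP2_smul_add P 1 e 0 f 0 u (arcFlow i₀ j₀ r)
  simp only [one_smul, add_zero, one_mul] at this
  rw [this]
  simp [objCP2, sum_sum_mul_arcFlow P.Iout P.mu hj₀]

lemma FlowBalanced.smul_add {e f e₂ f₂ : I → I → ℝ} (h : FlowBalanced P e f)
    (h₂ : FlowBalanced P e₂ f₂) (s : ℝ) : FlowBalanced P (s • e + e₂) (s • f + f₂) := by
  intro i
  simp only [Pi.add_apply, Pi.smul_apply, smul_eq_mul, mul_add, Finset.sum_add_distrib,
    mul_left_comm _ s, ← Finset.mul_sum]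
  linear_combination s * h i + h₂ i

section Cycle

variable {c : ℕ → I} {n : ℕ}

lemma flowBalanced_cycle (hj₀ : j₀ ∈ P.Iout i₀) (hc₀ : c 0 = j₀) (hcn : c n = i₀)
    (hc : ∀ m < n, c (m + 1) ∈ P.Itil (c m)) (ε : ℝ) :
    FlowBalanced P (walkFlow P.mutil c n (ε * P.mu i₀ j₀)) (arcFlow i₀ j₀ ε) := by
  intro i
  have hwalk := walkFlow_in_sub_out P.mutil (ε * P.mu i₀ j₀) hc
    (fun m hm => (P.mutil_pos _ _ (hc m hm)).ne') i
  rw [sum_mul_arcFlow_in P.Iout P.mu hj₀, sum_mul_arcFlow_out P.Iout P.mu hj₀]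
  rw [hc₀, hcn] at hwalk
  split_ifs at hwalk ⊢ <;> linear_combination hwalk

lemma objCP2_cycle_s11 (hj₀ : j₀ ∈ P.Iout i₀) (hc : ∀ m < n, c (m + 1) ∈ P.Itil (c m))
    (ε w : ℝ) :
    objCP2 P (walkFlow P.mutil c n (ε * P.mu i₀ j₀)) (arcFlow i₀ j₀ ε) (arcFlow i₀ j₀ w) =
      P.mu i₀ j₀ * w - P.mu i₀ j₀ * P.phi i₀ j₀ * ε -
        ε * P.mu i₀ j₀ * ∑ m ∈ range n, P.psi (c m) (c (m + 1)) := by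
  simp only [objCP2, Finset.sum_sub_distrib]
  rw [sum_sum_mul_arcFlow P.Iout P.mu hj₀, sum_sum_mul_arcFlow P.Iout _ hj₀,
    sum_sum_mul_walkFlow _ P.mutil _ hc, Finset.mul_sum]
  congr 1
  refine Finset.sum_congr rfl fun m hm => ?_
  have := (P.mutil_pos _ _ (hc m (Finset.mem_range.1 hm))).ne'
  field_simp

lemma Shared2.smul_add_cycle {a q : I → ℝ} {e f : I → I → ℝ} (h : Shared2 P a e f q)
    (hj₀ : j₀ ∈ P.Iout i₀) (hc₀ : c 0 = j₀) (hcn : c n = i₀)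
    (hc : ∀ m < n, c (m + 1) ∈ P.Itil (c m)) {s ε : ℝ} (hs : 0 ≤ s) (hε : 0 ≤ ε)
    (hmass : s + ε * (1 + ∑ m ∈ range n, P.mu i₀ j₀ / P.mutil (c m) (c (m + 1))) = 1) :
    Shared2 P (s • a) (s • e + walkFlow P.mutil c n (ε * P.mu i₀ j₀))
      (s • f + arcFlow i₀ j₀ ε) 1 := by
  obtain ⟨ha, he, hf, -, hbal, htot⟩ := h
  have hμ₀ := P.mu_pos i₀ j₀ hj₀
  have hwalk : ∑ i, ∑ j ∈ P.Itil i, walkFlow P.mutil c n (ε * P.mu i₀ j₀) i j =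
      ε * ∑ m ∈ range n, P.mu i₀ j₀ / P.mutil (c m) (c (m + 1)) := by
    simpa [Finset.mul_sum, mul_div_assoc] using
      sum_sum_mul_walkFlow (fun _ _ => 1) P.mutil (ε * P.mu i₀ j₀) hc
  have harc : ∑ i, ∑ j ∈ P.Iout i, arcFlow i₀ j₀ ε i j = ε := by
    simpa using sum_sum_mul_arcFlow P.Iout (fun _ _ => 1) hj₀ ε
  refine ⟨fun i => mul_nonneg hs (ha i), fun i j hij => ?_, fun i j hij => ?_,
    fun i => ⟨zero_le_one, le_rfl⟩,
    FlowBalanced.smul_add hbal (flowBalanced_cycle hj₀ hc₀ hcn hc ε) s, ?_⟩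
  · exact add_nonneg (mul_nonneg hs (he i j hij))
      (walkFlow_nonneg (fun m hm => P.mutil_pos _ _ (hc m hm)) (by positivity) i j)
  · refine add_nonneg (mul_nonneg hs (hf i j hij)) ?_
    unfold arcFlow
    split_ifs <;> simp [hε]
  · simp only [Pi.add_apply, Pi.smul_apply, smul_eq_mul, Finset.sum_add_distrib,
      ← Finset.mul_sum, hwalk, harc]
    linear_combination s * htot + hmass

lemma CP2Feasible.smul_add_cycle {a q : I → ℝ} {e f u : I → I → ℝ}
    (h : CP2Feasible P a e f u q) (hj₀ : j₀ ∈ P.Iout i₀) (hf₀ : f i₀ j₀ = 0)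
    (hc₀ : c 0 = j₀) (hcn : c n = i₀) (hc : ∀ m < n, c (m + 1) ∈ P.Itil (c m)) {s ε w : ℝ}
    (hs : 0 < s) (hs₁ : s ≤ 1) (hε : 0 < ε)
    (hmass : s + ε * (1 + ∑ m ∈ range n, P.mu i₀ j₀ / P.mutil (c m) (c (m + 1))) = 1)
    (hεlam : P.mu i₀ j₀ * ε < P.lam i₀ j₀)
    (hw : P.beta i₀ j₀ * P.mu i₀ j₀ * w - P.alpha i₀ j₀ * P.mu i₀ j₀ * ε ≤
      P.mu i₀ j₀ * ε * Real.log ((P.lam i₀ j₀ - P.mu i₀ j₀ * ε) / (P.mu i₀ j₀ * ε))) :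
    CP2Feasible P (s • a) (s • e + walkFlow P.mutil c n (ε * P.mu i₀ j₀))
      (s • f + arcFlow i₀ j₀ ε) (s • u + arcFlow i₀ j₀ w) 1 := by
  obtain ⟨hsh, hcone⟩ := h
  refine ⟨hsh.smul_add_cycle hj₀ hc₀ hcn hc hs.le hε.le hmass, fun i j hij => ?_⟩
  have hμ := P.mu_pos i j hij
  have hβ := P.beta_pos i j hij
  by_cases hij₀ : i = i₀ ∧ j = j₀
  · obtain ⟨rfl, rfl⟩ := hij₀
    have hu : u i j ≤ 0 := by
      have := nonpos_of_mk_zero_mem_Kexp (by simpa [hf₀] using hcone i j hij)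
      exact nonpos_of_mul_nonpos_right this (by positivity)
    simp only [Pi.add_apply, Pi.smul_apply, Pi.one_apply, smul_eq_mul, arcFlow, and_self,
      if_true, hf₀, mul_zero, zero_add, mul_one]
    refine Or.inl ⟨by linarith, by positivity, ?_⟩
    nlinarith [mul_nonpos_of_nonneg_of_nonpos (by positivity : 0 ≤ P.beta i j * P.mu i j * s) hu]
  · have hq := hsh.2.2.2.1 i
    simp only [Pi.add_apply, Pi.smul_apply, Pi.one_apply, smul_eq_mul, arcFlow, if_neg hij₀,
      add_zero]
    refine mem_Kexp_of_fst_le (x := s * (P.lam i j * q i - P.mu i j * f i j)) ?_ ?_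
    · convert smul_mem_Kexp (hcone i j hij) hs using 3 <;> ring
    · nlinarith [P.lam_pos i j hij, mul_le_one₀ hs₁ hq.1 hq.2]

lemma CP2Feasible.exists_objCP2_gt_of_f_eq_zero {a q : I → ℝ} {e f u : I → I → ℝ}
    (h : CP2Feasible P a e f u q) (hj₀ : j₀ ∈ P.Iout i₀) (hf₀ : f i₀ j₀ = 0) :
    ∃ a' e' f' u' q', CP2Feasible P a' e' f' u' q' ∧ objCP2 P e f u < objCP2 P e' f' u' := by
  obtain ⟨n, c, hc₀, hcn, hc⟩ := P.connected j₀ i₀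
  have hμ := P.mu_pos i₀ j₀ hj₀
  have hβ := P.beta_pos i₀ j₀ hj₀
  have hlam := P.lam_pos i₀ j₀ hj₀
  set C := 1 + ∑ m ∈ range n, P.mu i₀ j₀ / P.mutil (c m) (c (m + 1))
  have hC : 0 < C := by
    have : 0 ≤ ∑ m ∈ range n, P.mu i₀ j₀ / P.mutil (c m) (c (m + 1)) :=
      Finset.sum_nonneg fun m hm =>
        (div_pos hμ (P.mutil_pos _ _ (hc m (Finset.mem_range.1 hm)))).le
    positivity
  set Ψ := ∑ m ∈ range n, P.psi (c m) (c (m + 1))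
  set V := objCP2 P e f u
  have hsmall : ∀ᶠ ε in 𝓝[>] (0 : ℝ), ε < min (1 / C) (P.lam i₀ j₀ / P.mu i₀ j₀) :=
    nhdsWithin_le_nhds (eventually_lt_nhds (lt_min (by positivity) (by positivity)))
  obtain ⟨ε, ⟨hL, hεsmall⟩, hε⟩ := (((eventually_lt_log_div hlam hμ
    (P.beta i₀ j₀ / P.mu i₀ j₀ * (C * V + P.mu i₀ j₀ * P.phi i₀ j₀ + P.mu i₀ j₀ * Ψ) -
      P.alpha i₀ j₀)).and hsmall).and self_mem_nhdsWithin).exists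
  set L := Real.log ((P.lam i₀ j₀ - P.mu i₀ j₀ * ε) / (P.mu i₀ j₀ * ε))
  have hεC : ε * C < 1 := (lt_div_iff₀ hC).1 (lt_min_iff.1 hεsmall).1
  have hεlam : P.mu i₀ j₀ * ε < P.lam i₀ j₀ := by
    have := (lt_div_iff₀ hμ).1 (lt_min_iff.1 hεsmall).2
    linarith
  refine ⟨_, _, _, _, _, h.smul_add_cycle hj₀ hf₀ hc₀ hcn hc (s := 1 - ε * C)
    (w := ε / P.beta i₀ j₀ * (P.alpha i₀ j₀ + L)) (by linarith)
    (by nlinarith) hε (by ring) hεlam (le_of_eq (by field_simp; ring)), ?_⟩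
  rw [objCP2_smul_add, objCP2_cycle_s11 hj₀ hc]
  have hgain : C * V + P.mu i₀ j₀ * P.phi i₀ j₀ + P.mu i₀ j₀ * Ψ <
      P.mu i₀ j₀ / P.beta i₀ j₀ * (P.alpha i₀ j₀ + L) := by
    rw [sub_lt_iff_lt_add, ← lt_div_iff₀' (by positivity)] at hL
    exact hL.trans_eq (by field_simp; ring)
  have hw : P.mu i₀ j₀ * (ε / P.beta i₀ j₀ * (P.alpha i₀ j₀ + L)) =
      ε * (P.mu i₀ j₀ / P.beta i₀ j₀ * (P.alpha i₀ j₀ + L)) := by ring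
  linarith [mul_lt_mul_of_pos_left hgain hε]

end Cycle

lemma CP2Feasible.exists_objCP2_gt_of_q_lt_one {a q : I → ℝ} {e f u : I → I → ℝ}
    (h : CP2Feasible P a e f u q) (hj₀ : j₀ ∈ P.Iout i₀) (hf : 0 < f i₀ j₀) (hq : q i₀ < 1) :
    ∃ u' q', CP2Feasible P a e f u' q' ∧ objCP2 P e f u < objCP2 P e f u' := by
  obtain ⟨⟨ha, he, hf', hq', hbal, htot⟩, hcone⟩ := h
  have hμ := P.mu_pos i₀ j₀ hj₀
  have hβ := P.beta_pos i₀ j₀ hj₀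
  obtain ⟨d, hd, hmem⟩ := exists_pos_add_mem_Kexp_of_fst_lt (hcone i₀ j₀ hj₀) (mul_pos hμ hf)
    (x' := P.lam i₀ j₀ * 1 - P.mu i₀ j₀ * f i₀ j₀) (by nlinarith [P.lam_pos i₀ j₀ hj₀])
  have hraise : ∀ i, q i ≤ Function.update q i₀ 1 i ∧ Function.update q i₀ 1 i ≤ 1 := by
    intro i
    rcases eq_or_ne i i₀ with rfl | hi
    · simp [hq.le]
    · simp [hi, (hq' i).2]
  refine ⟨u + arcFlow i₀ j₀ (d / (P.beta i₀ j₀ * P.mu i₀ j₀)), Function.update q i₀ 1,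
    ⟨⟨ha, he, hf', fun i => ⟨(hq' i).1.trans (hraise i).1, (hraise i).2⟩, hbal, htot⟩,
      fun i j hij => ?_⟩, ?_⟩
  · by_cases hij₀ : i = i₀ ∧ j = j₀
    · obtain ⟨rfl, rfl⟩ := hij₀
      convert hmem using 3
      · simp
      · simp only [Pi.add_apply, arcFlow, and_self, if_true]
        field_simp
        ring
    · simp only [Pi.add_apply, arcFlow, if_neg hij₀, add_zero]
      exact mem_Kexp_of_fst_le (hcone i j hij)
        (by nlinarith [P.lam_pos i j hij, (hraise i).1])
  · rw [objCP2_add_arcFlow hj₀]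
    have : 0 < P.mu i₀ j₀ * (d / (P.beta i₀ j₀ * P.mu i₀ j₀)) := by positivity
    linarith

/-- At every optimal solution of CP2, `f̄*_{ij} > 0` for every `(i,j) ∈ IJ`, and
`q*_i = 1` for every zone `i` having at least one trip destination. -/
theorem CP2_optimal_f_pos_q_one {I : Type} [Fintype I] [DecidableEq I] (P : Params2 I)
    (a : I → ℝ) (e f u : I → I → ℝ) (q : I → ℝ)
    (hopt : CP2Optimal P a e f u q) :
    (∀ i j, j ∈ P.Iout i → 0 < f i j) ∧
    (∀ i : I, (∃ j, j ∈ P.Iout i) → q i = 1) := by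
  obtain ⟨hfeas, hmax⟩ := hopt
  have hfpos : ∀ i j, j ∈ P.Iout i → 0 < f i j := by
    intro i j hij
    refine (hfeas.1.2.2.1 i j hij).lt_of_ne' fun hf₀ => ?_
    obtain ⟨a', e', f', u', q', hfeas', hlt⟩ := hfeas.exists_objCP2_gt_of_f_eq_zero hij hf₀
    exact (hmax _ _ _ _ _ hfeas').not_gt hlt
  refine ⟨hfpos, fun i ⟨j, hij⟩ => ?_⟩
  refine (hfeas.1.2.2.2.1 i).2.eq_of_not_lt fun hq => ?_
  obtain ⟨u', q', hfeas', hlt⟩ := hfeas.exists_objCP2_gt_of_q_lt_one hij (hfpos i j hij) hq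
  exact (hmax _ _ _ _ _ hfeas').not_gt hlt

end
end

section
/- Closure description of the exponential cone: the closure in ℝ³ of the set {(a₁,a₂,a₃)∈ℝ³ : a₁>0, a₂>0, a₃ ≤ a₂·log(a₁/a₂)} equals {(a₁,a₂,a₃)∈ℝ³ : a₁>0, a₂>0, a₃ ≤ a₂·log(a₁/a₂)} ∪ {(a₁,0,a₃)∈ℝ³ : a₁≥0, a₃≤0}. -/
/-! On `v₂ > 0` the defining inequality is equivalent to `v₂ exp (v₃ / v₂) ≤ v₁`, which is
a closed condition there, so limit points with `v₂ > 0` stay in the set. Limit points with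
`v₂ = 0` have `v₁ ≥ 0` and, by `b log (a / b) ≤ 2 √(ab)`, also `v₃ ≤ 0`. Conversely
`(a, 0, c)` is the limit of `(a + t, t, c)` as `t → 0⁺`, and these lie in the set since
`t log ((a + t) / t) ≥ 0 ≥ c`. -/

open Real Set Filter Topology

theorem Real.mul_log_div_le_two_sqrt_mul {a b : ℝ} (ha : 0 < a) (hb : 0 < b) :
    b * log (a / b) ≤ 2 * √(a * b) := by
  have hab : 0 < a / b := div_pos ha hb
  have hlog : log (a / b) ≤ 2 * √(a / b) := by
    have := log_le_sub_one_of_pos (sqrt_pos.mpr hab)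
    rw [log_sqrt hab.le] at this
    linarith
  have hsqrt : b * √(a / b) = √(a * b) := by
    symm
    rw [sqrt_eq_iff_mul_self_eq_of_pos (by positivity), mul_mul_mul_comm, mul_self_sqrt hab.le]
    field_simp
  calc b * log (a / b) ≤ b * (2 * √(a / b)) := mul_le_mul_of_nonneg_left hlog hb.le
    _ = 2 * √(a * b) := by rw [← hsqrt]; ring

theorem Real.le_mul_log_div_iff {a b c : ℝ} (ha : 0 < a) (hb : 0 < b) :
    c ≤ b * log (a / b) ↔ b * exp (c / b) ≤ a := by
  rw [← div_le_iff₀' hb, le_log_iff_exp_le (div_pos ha hb), le_div_iff₀' hb]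

def expConeCore : Set (ℝ × ℝ × ℝ) :=
  {v | 0 < v.1 ∧ 0 < v.2.1 ∧ v.2.2 ≤ v.2.1 * log (v.1 / v.2.1)}

theorem expConeCore_eq :
    expConeCore = {v : ℝ × ℝ × ℝ | 0 < v.2.1 ∧ v.2.1 * exp (v.2.2 / v.2.1) ≤ v.1} := by
  ext ⟨a, b, c⟩
  simp only [expConeCore, mem_ofPred_eq]
  constructor
  · rintro ⟨ha, hb, hc⟩
    exact ⟨hb, (le_mul_log_div_iff ha hb).mp hc⟩
  · rintro ⟨hb, h⟩
    have ha : 0 < a := (mul_pos hb (exp_pos _)).trans_le h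
    exact ⟨ha, hb, (le_mul_log_div_iff ha hb).mpr h⟩

theorem closure_expConeCore_subset :
    closure expConeCore ⊆ {v | 0 ≤ v.1 ∧ 0 ≤ v.2.1 ∧ v.2.2 ≤ 2 * √(v.1 * v.2.1)} := by
  refine closure_minimal (fun v ⟨ha, hb, hc⟩ => ⟨ha.le, hb.le, ?_⟩) ?_
  · exact hc.trans (mul_log_div_le_two_sqrt_mul ha hb)
  · exact (isClosed_le continuous_const continuous_fst).inter
      ((isClosed_le continuous_const continuous_snd.fst).inter
        (isClosed_le continuous_snd.snd (by fun_prop)))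

theorem mem_expConeCore_of_mem_closure {v : ℝ × ℝ × ℝ} (hv : v ∈ closure expConeCore)
    (hb : 0 < v.2.1) : v ∈ expConeCore := by
  rw [expConeCore_eq] at hv ⊢
  let f : ℝ × ℝ × ℝ → ℝ × ℝ := fun w => (w.2.1 * exp (w.2.2 / w.2.1), w.1)
  have hf : ContinuousAt f v := by
    have : ContinuousAt (fun w : ℝ × ℝ × ℝ => w.2.2 / w.2.1) v :=
      continuousAt_snd.snd.div continuousAt_snd.fst hb.ne'
    fun_prop
  have hmaps : MapsTo f {w | 0 < w.2.1 ∧ w.2.1 * exp (w.2.2 / w.2.1) ≤ w.1}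
      {p | p.1 ≤ p.2} := fun w hw => hw.2
  have hclosed : IsClosed {p : ℝ × ℝ | p.1 ≤ p.2} :=
    isClosed_le continuous_fst continuous_snd
  exact ⟨hb, hclosed.closure_subset (hf.continuousWithinAt.mem_closure hv hmaps)⟩

theorem mk_zero_mem_closure_expConeCore {a c : ℝ} (ha : 0 ≤ a) (hc : c ≤ 0) :
    (a, 0, c) ∈ closure expConeCore := by
  have hlim : Tendsto (fun t : ℝ => (a + t, t, c)) (𝓝[>] 0) (𝓝 (a, 0, c)) := by
    have : Continuous fun t : ℝ => (a + t, t, c) := by fun_prop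
    simpa using (this.tendsto 0).mono_left nhdsWithin_le_nhds
  refine mem_closure_of_tendsto hlim (eventually_nhdsWithin_of_forall fun t (ht : 0 < t) => ?_)
  refine ⟨by linarith, ht, hc.trans (mul_nonneg ht.le (log_nonneg ?_))⟩
  rw [le_div_iff₀ ht]
  linarith

/-- Closure description of the exponential cone: the closure of
`{(a₁,a₂,a₃) : a₁ > 0, a₂ > 0, a₃ ≤ a₂ log(a₁/a₂)}` in `ℝ³` is that set together with
`{(a₁,0,a₃) : a₁ ≥ 0, a₃ ≤ 0}`. -/
theorem Kexp_closure :
    closure {v : ℝ × ℝ × ℝ |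
        0 < v.1 ∧ 0 < v.2.1 ∧ v.2.2 ≤ v.2.1 * Real.log (v.1 / v.2.1)} =
      {v : ℝ × ℝ × ℝ |
        0 < v.1 ∧ 0 < v.2.1 ∧ v.2.2 ≤ v.2.1 * Real.log (v.1 / v.2.1)} ∪
      {v : ℝ × ℝ × ℝ | 0 ≤ v.1 ∧ v.2.1 = 0 ∧ v.2.2 ≤ 0} := by
  change closure expConeCore = expConeCore ∪ _
  refine subset_antisymm (fun v hv => ?_) (union_subset subset_closure ?_)
  · obtain ⟨ha, hb, hc⟩ := closure_expConeCore_subset hv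
    rcases hb.eq_or_lt with hb | hb
    · exact Or.inr ⟨ha, hb.symm, by simpa [← hb] using hc⟩
    · exact Or.inl (mem_expConeCore_of_mem_closure hv hb)
  · rintro ⟨a, b, c⟩ ⟨ha, rfl : b = 0, hc⟩
    exact mk_zero_mem_closure_expConeCore ha hc
end
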